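/- Let G be a countable group, A a finite set with at least two elements, and X ⊆ A^G a subshift such that for every a ∈ A there exists x ∈ X with x(1_G) = a. Then there exist a continuous action α of G on the Cantor space 𝒞 and a continuous map c : 𝒞 → A such that the map Q : 𝒞 → A^G defined by Q(z)(g) = c(α(g⁻¹)(z)) is equivariant between α and the shift action and has image exactly X. -/

import Mathlib

open Topology

/-- The Cantor space `𝒞`. -/
abbrev Cantor : Type := ℕ → Bool

/-- `α : G → C(𝒞,𝒞)` is a continuous action if it is a homomorphism into the
self-homeomorphisms of `𝒞` (recorded as continuous maps; continuity of the inverse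
`α g⁻¹` is automatic from the homomorphism equations). -/
def IsAction (G : Type) [Group G] (α : G → C(Cantor, Cantor)) : Prop :=
  α 1 = ContinuousMap.id Cantor ∧ ∀ g h : G, α (g * h) = (α g).comp (α h)

/-- The space `Act_G(𝒞)` of continuous actions of `G` on the Cantor space,
topologized as a subspace of `C(𝒞,𝒞)^G` (compact-open topology on each factor). -/
abbrev ActSpace (G : Type) [Group G] : Type :=
  {α : G → C(Cantor, Cantor) // IsAction G α}

/-- The conjugacy class of an action `α` under the conjugation action of `Homeo(𝒞)`. -/
def conjClass {G : Type} [Group G] (α : ActSpace G) : Set (ActSpace G) :=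
  {β | ∃ φ : Cantor ≃ₜ Cantor, ∀ g : G,
    (β.1 g : Cantor → Cantor) = φ ∘ (α.1 g : Cantor → Cantor) ∘ φ.symm}

/-- The strong topological Rokhlin property: some action on the Cantor space has a
comeager conjugacy class. -/
def HasSTRP (G : Type) [Group G] : Prop :=
  ∃ α : ActSpace G, conjClass α ∈ residual (ActSpace G)

/-- The shift action of `G` on `A^G`: `(g • x)(h) = x(g⁻¹h)`. -/
def shift {G : Type} [Group G] {A : Type} (g : G) (x : G → A) : G → A :=
  fun h => x (g⁻¹ * h)

/-- A subshift: closed (in the product of discrete topologies) and shift-invariant. -/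
def IsSubshift (G : Type) [Group G] (A : Type) (X : Set (G → A)) : Prop :=
  (letI : TopologicalSpace A := ⊥; IsClosed X) ∧ ∀ g : G, ∀ x ∈ X, shift g x ∈ X

/-- The set `X_F` of `F`-patterns of `X`. -/
def patterns {G A : Type} (F : Finset G) (X : Set (G → A)) : Set (F → A) :=
  (fun (x : G → A) (f : F) => x (f : G)) '' X

/-- Subshift of finite type, with defining window `E` and allowed patterns `𝔽`. -/
def IsSFT (G : Type) [Group G] (A : Type) (X : Set (G → A)) : Prop :=
  ∃ (E : Finset G) (𝔽 : Set (E → A)),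
    ∀ x : G → A, x ∈ X ↔ ∀ g : G, (fun e : E => shift g x (e : G)) ∈ 𝔽

/-- Continuity on a set, for a map between full shift spaces over discrete alphabets. -/
def ContinuousOnD {G A B : Type} (ψ : (G → B) → (G → A)) (Z : Set (G → B)) : Prop :=
  letI : TopologicalSpace A := ⊥
  letI : TopologicalSpace B := ⊥
  ContinuousOn ψ Z

/-- `G`-equivariance of a map between shift spaces, on a set. -/
def EquivariantOn {G A B : Type} [Group G] (ψ : (G → B) → (G → A)) (Z : Set (G → B)) : Prop :=
  ∀ g : G, ∀ z ∈ Z, ψ (shift g z) = shift g (ψ z)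

/-- A sofic subshift: a continuous `G`-equivariant image of a subshift of finite type. -/
def IsSofic (G : Type) [Group G] (A : Type) (X : Set (G → A)) : Prop :=
  ∃ (B : Type) (_ : Fintype B) (_ : Nontrivial B) (Z : Set (G → B))
    (ψ : (G → B) → (G → A)),
    IsSubshift G B Z ∧ IsSFT G B Z ∧ ContinuousOnD ψ Z ∧ EquivariantOn ψ Z ∧ ψ '' Z = X

/-- The sliding block code `Φ(y)(g) = f(d ↦ y(g·d))` induced by `f : (D → B) → A`. -/
def slidingBlock {G : Type} [Group G] {A B : Type} (D : Finset G)
    (f : (D → B) → A) : (G → B) → (G → A) :=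
  fun y g => f (fun d => y (g * (d : G)))

/-- A projectively isolated subshift. -/
def ProjIsolated (G : Type) [Group G] (A : Type) (X : Set (G → A)) : Prop :=
  ∃ (B : Type) (_ : Fintype B) (_ : Nontrivial B) (Y : Set (G → B))
    (F D : Finset G) (f : (D → B) → A),
    IsSubshift G B Y ∧
    slidingBlock D f '' Y = X ∧
    ∀ Z : Set (G → B), IsSubshift G B Z → patterns F Z = patterns F Y →
      slidingBlock D f '' Z = X

/-- An isolated subshift: an SFT `X` such that for some finite `F ⊆ G` no proper
subshift has the same `F`-patterns as `X`. -/
def IsIsolated (G : Type) [Group G] (A : Type) (X : Set (G → A)) : Prop :=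
  IsSFT G A X ∧ ∃ F : Finset G, ∀ Y : Set (G → A),
    IsSubshift G A Y → Y ⊂ X → patterns F Y ≠ patterns F X

/-- A strongly projectively isolated subshift: a continuous `G`-equivariant image of an
isolated subshift. -/
def StronglyProjIsolated (G : Type) [Group G] (A : Type) (X : Set (G → A)) : Prop :=
  ∃ (B : Type) (_ : Fintype B) (_ : Nontrivial B) (Y : Set (G → B))
    (ψ : (G → B) → (G → A)),
    IsSubshift G B Y ∧ IsIsolated G B Y ∧
    ContinuousOnD ψ Y ∧ EquivariantOn ψ Y ∧ ψ '' Y = X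

/-- Shadowing (the pseudo-orbit tracing property) of an action `act` of `G`,
with respect to a distance function `d`. -/
def HasShadowing {G X : Type} [Group G] (d : X → X → ℝ) (act : G → X → X) : Prop :=
  ∀ ε : ℝ, 0 < ε → ∃ (δ : ℝ) (S : Finset G), 0 < δ ∧
    ∀ x : G → X, (∀ g : G, ∀ s ∈ S, d (act s (x g)) (x (s * g)) < δ) →
      ∃ y : X, ∀ g : G, d (x g) (act g y) < ε

/-- A finite partition of the whole space into nonempty clopen sets. -/
def IsClopenPartition {X : Type} [TopologicalSpace X] (parts : Finset (Set X)) : Prop :=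
  (∀ P ∈ parts, IsClopen P ∧ P.Nonempty) ∧
  (∀ P ∈ parts, ∀ Q ∈ parts, P ≠ Q → Disjoint P Q) ∧
  (⋃ P ∈ parts, P) = Set.univ

/-- A finite partition of a subshift `X` into nonempty subsets that are clopen in `X`. -/
def IsClopenPartitionIn {G A : Type} (X : Set (G → A)) (parts : Finset (Set (G → A))) : Prop :=
  (letI : TopologicalSpace A := ⊥;
    ∀ P ∈ parts, P.Nonempty ∧ P ⊆ X ∧ IsClopen (Subtype.val ⁻¹' P : Set X)) ∧
  (∀ P ∈ parts, ∀ Q ∈ parts, P ≠ Q → Disjoint P Q) ∧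
  (⋃ P ∈ parts, P) = X

/-- `X` is `fam`-minimal: no nonempty proper subshift of `X` meets every member of `fam`. -/
def AMinimal {G A : Type} [Group G] (X : Set (G → A)) (fam : Set (Set (G → A))) : Prop :=
  ¬ ∃ Y : Set (G → A), IsSubshift G A Y ∧ Y.Nonempty ∧ Y ⊂ X ∧
    ∀ S ∈ fam, (Y ∩ S).Nonempty

/-- The free product of a subshift `V ⊆ B^G` and a subshift `W ⊆ B^H`, a subshift
of `B^(G∗H)`. -/
def freeProd {G H B : Type} [Group G] [Group H]
    (V : Set (G → B)) (W : Set (H → B)) : Set (Monoid.Coprod G H → B) :=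
  {x | ∀ g : Monoid.Coprod G H,
    (fun h : G => x (g * Monoid.Coprod.inl h)) ∈ V ∧
    (fun k : H => x (g * Monoid.Coprod.inr k)) ∈ W}

/-- Continuity of a map into a finite (discrete) alphabet. -/
def ContinuousToDiscrete {X A : Type} [TopologicalSpace X] (c : X → A) : Prop :=
  letI : TopologicalSpace A := ⊥
  Continuous c

/-- Continuity of a map into the shift space `A^G` over a discrete alphabet `A`. -/
def ContinuousIntoShift {X G A : Type} [TopologicalSpace X] (φ : X → (G → A)) : Prop :=
  letI : TopologicalSpace A := ⊥
  Continuous φ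

/-!
`Cantor × X` is compact, metrizable and zero-dimensional, and it has no isolated points because
of its first factor, so by Brouwer's theorem there is a homeomorphism `Φ : Cantor × X ≃ₜ Cantor`.
Transporting the action `id × shift` along `Φ` gives the action `α`, and for
`c z = (Φ⁻¹ z).2 1` the map `z ↦ (g ↦ c (α g⁻¹ z))` is the projection `z ↦ (Φ⁻¹ z).2` onto `X`.

Brouwer's theorem is proved with a binary scheme of clopen atoms: fix a countable family of
clopen sets `W n` separating points, and split every atom of level `n` by `W n` if `W n` splits
it, and by some `W m` that does otherwise (one exists because atoms are nonempty open sets in a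
perfect space). Points then have distinct addresses, every address is realized by compactness,
and the address map is a homeomorphism onto `ℕ → Bool`.
-/

open Set Filter Topology PiNat

instance Pi.perfectSpace {ι β : Type*} [Infinite ι] [TopologicalSpace β] [Nontrivial β] :
    PerfectSpace (ι → β) := by
  classical
  refine perfectSpace_iff_forall_not_isolated.2 fun z => ?_
  choose b hb using fun i => exists_ne (z i)
  have : Tendsto (fun i => Function.update z i (b i)) cofinite (𝓝[≠] z) := by
    refine tendsto_nhdsWithin_iff.2 ⟨tendsto_pi_nhds.2 fun j => ?_,
      Eventually.of_forall fun i h => hb i (by rw [← h, Function.update_self])⟩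
    exact tendsto_const_nhds.congr'
      ((eventually_cofinite_ne j).mono fun i hi => (Function.update_of_ne hi.symm _ _).symm)
  exact this.neBot

instance Prod.perfectSpace_of_left {α β : Type*} [TopologicalSpace α] [TopologicalSpace β]
    [PerfectSpace α] : PerfectSpace (α × β) := by
  refine perfectSpace_iff_forall_not_isolated.2 fun p => ?_
  have : Tendsto (fun a => (a, p.2)) (𝓝[≠] p.1) (𝓝[≠] p) :=
    tendsto_nhdsWithin_iff.2 ⟨(Continuous.prodMk_left p.2).continuousAt.tendsto.mono_left
      nhdsWithin_le_nhds, eventually_nhdsWithin_of_forall fun a ha h => ha (congrArg Prod.fst h)⟩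
  exact this.neBot

namespace ClopenScheme

variable {Y : Type*} (W : ℕ → Set Y)

def SplitsBy (a s : Set Y) : Prop := (a ∩ s).Nonempty ∧ (a \ s).Nonempty

open Classical in
/-- Preferring `W n` at level `n` is what makes the address map injective. -/
noncomputable def splitIndex (n : ℕ) (a : Set Y) : ℕ :=
  if SplitsBy a (W n) then n else if h : ∃ m, SplitsBy a (W m) then h.choose else n

/-- Atoms are indexed by lists with the newest bit first, as in `PiNat.res`. -/
def atom : List Bool → Set Y
  | [] => univ
  | b :: l => {y | y ∈ atom l ∧ (y ∈ W (splitIndex W l.length (atom l)) ↔ b)}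

noncomputable def cut (l : List Bool) : Set Y := W (splitIndex W l.length (atom W l))

lemma atom_cons (b : Bool) (l : List Bool) :
    atom W (b :: l) = {y | y ∈ atom W l ∧ (y ∈ cut W l ↔ b)} := rfl

open Classical in
noncomputable def code (y : Y) : ℕ → List Bool
  | 0 => []
  | n + 1 => decide (y ∈ cut W (code y n)) :: code y n

open Classical in
noncomputable def address (y : Y) (n : ℕ) : Bool := decide (y ∈ cut W (code W y n))

lemma code_eq_res (y : Y) (n : ℕ) : code W y n = res (address W y) n := by
  induction n with
  | zero => rfl
  | succ n ih => rw [res_succ, ← ih]; rfl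

lemma mem_atom_iff {y : Y} {l : List Bool} : y ∈ atom W l ↔ code W y l.length = l := by
  induction l with
  | nil => simp [atom, code]
  | cons b l ih =>
    simp only [atom_cons, Set.mem_ofPred_eq, ih, List.length_cons, code, List.cons.injEq]
    constructor
    · rintro ⟨h, hb⟩
      rw [h]
      exact ⟨by cases b <;> simpa using hb, rfl⟩
    · rintro ⟨hb, h⟩
      rw [h] at hb
      exact ⟨h, by cases b <;> simpa using hb⟩

lemma mem_atom_res_iff {y : Y} {z : ℕ → Bool} {n : ℕ} :
    y ∈ atom W (res z n) ↔ ∀ m < n, address W y m = z m := by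
  rw [mem_atom_iff, res_length, code_eq_res, res_eq_res]

lemma atom_res_succ_subset (z : ℕ → Bool) (n : ℕ) :
    atom W (res z (n + 1)) ⊆ atom W (res z n) := by
  rw [res_succ]
  exact fun _ hy => hy.1

variable {W}

lemma splitsBy_splitIndex {a : Set Y} (h : ∃ m, SplitsBy a (W m)) (n : ℕ) :
    SplitsBy a (W (splitIndex W n a)) := by
  unfold splitIndex
  split_ifs with hn
  · exact hn
  · exact h.choose_spec

lemma splitIndex_of_splitsBy {a : Set Y} {n : ℕ} (h : SplitsBy a (W n)) :
    splitIndex W n a = n := if_pos h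

lemma address_injective (hsep : ∀ y y', y ≠ y' → ∃ n, y ∈ W n ∧ y' ∉ W n) :
    Function.Injective (address W) := by
  intro y y' h
  by_contra hne
  obtain ⟨n, hy, hy'⟩ := hsep y y' hne
  have hyl : y ∈ atom W (res (address W y) n) := (mem_atom_res_iff W).2 fun _ _ => rfl
  have hy'l : y' ∈ atom W (res (address W y) n) := (mem_atom_res_iff W).2 fun m _ => by rw [h]
  have hcut : cut W (res (address W y) n) = W n := by
    rw [cut, res_length, splitIndex_of_splitsBy ⟨⟨y, hyl, hy⟩, ⟨y', hy'l, hy'⟩⟩]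
  have hn := congrFun h n
  rw [address, address, code_eq_res, code_eq_res, ← h, hcut] at hn
  simp [hy, hy'] at hn

variable [TopologicalSpace Y]

lemma isClopen_atom (hW : ∀ n, IsClopen (W n)) : ∀ l, IsClopen (atom W l)
  | [] => isClopen_univ
  | b :: l => by
    rw [atom_cons]
    cases b
    · simp only [Bool.false_eq_true, iff_false]
      exact (isClopen_atom hW l).diff (hW _)
    · simp only [iff_true]
      exact (isClopen_atom hW l).inter (hW _)

lemma continuous_address (hW : ∀ n, IsClopen (W n)) : Continuous (address W) := by
  refine continuous_pi fun n => IsLocallyConstant.continuous ?_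
  refine IsLocallyConstant.iff_eventually_eq _ |>.2 fun y => ?_
  have hy : y ∈ atom W (res (address W y) (n + 1)) := mem_atom_res_iff W |>.2 fun _ _ => rfl
  filter_upwards [(isClopen_atom hW _).isOpen.mem_nhds hy] with y' hy'
  exact (mem_atom_res_iff W).1 hy' n n.lt_succ_self

variable [PerfectSpace Y]

lemma exists_splitsBy (hsep : ∀ y y', y ≠ y' → ∃ n, y ∈ W n ∧ y' ∉ W n) {a : Set Y}
    (ha : IsOpen a) (hne : a.Nonempty) : ∃ m, SplitsBy a (W m) := by
  obtain ⟨y, hy⟩ := hne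
  obtain ⟨y', ⟨hy'a, -⟩, hne⟩ :=
    preperfect_iff_nhds.1 PerfectSpace.univ_preperfect y (mem_univ y) a (ha.mem_nhds hy)
  obtain ⟨m, hm, hm'⟩ := hsep y y' hne.symm
  exact ⟨m, ⟨y, hy, hm⟩, ⟨y', hy'a, hm'⟩⟩

lemma atom_nonempty [Nonempty Y] (hW : ∀ n, IsClopen (W n))
    (hsep : ∀ y y', y ≠ y' → ∃ n, y ∈ W n ∧ y' ∉ W n) : ∀ l, (atom W l).Nonempty
  | [] => univ_nonempty
  | b :: l => by
    obtain ⟨⟨y, hy, hyc⟩, ⟨y', hy', hy'c⟩⟩ := splitsBy_splitIndex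
      (exists_splitsBy hsep (isClopen_atom hW l).isOpen (atom_nonempty hW hsep l)) l.length
    cases b
    · exact ⟨y', hy', by simpa [cut] using hy'c⟩
    · exact ⟨y, hy, by simpa [cut] using hyc⟩

lemma address_surjective [CompactSpace Y] [Nonempty Y] (hW : ∀ n, IsClopen (W n))
    (hsep : ∀ y y', y ≠ y' → ∃ n, y ∈ W n ∧ y' ∉ W n) : Function.Surjective (address W) := by
  intro z
  obtain ⟨y, hy⟩ := IsCompact.nonempty_iInter_of_sequence_nonempty_isCompact_isClosed
    (fun n => atom W (res z n)) (atom_res_succ_subset W z) (fun n => atom_nonempty hW hsep _)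
    (isClopen_atom hW _).isClosed.isCompact (fun n => (isClopen_atom hW _).isClosed)
  exact ⟨y, funext fun n => (mem_atom_res_iff W).1 (mem_iInter.1 hy (n + 1)) n n.lt_succ_self⟩

end ClopenScheme

open ClopenScheme in
theorem nonempty_homeomorph_cantor_of_separating_clopens {Y : Type*} [TopologicalSpace Y]
    [CompactSpace Y] [PerfectSpace Y] [Nonempty Y] (W : ℕ → Set Y) (hW : ∀ n, IsClopen (W n))
    (hsep : ∀ y y', y ≠ y' → ∃ n, y ∈ W n ∧ y' ∉ W n) : Nonempty (Y ≃ₜ Cantor) :=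
  ⟨(continuous_address hW).homeoOfEquivCompactToT2
    (f := Equiv.ofBijective _ ⟨address_injective hsep, address_surjective hW hsep⟩)⟩

theorem exists_separating_clopen_seq (Y : Type*) [TopologicalSpace Y] [T2Space Y]
    [CompactSpace Y] [TotallyDisconnectedSpace Y] [SecondCountableTopology Y] [Nonempty Y] :
    ∃ W : ℕ → Set Y, (∀ n, IsClopen (W n)) ∧ ∀ y y', y ≠ y' → ∃ n, y ∈ W n ∧ y' ∉ W n := by
  obtain ⟨s, hs, hsc, hbasis⟩ := isTopologicalBasis_isClopen.exists_countable (α := Y)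
  obtain ⟨y⟩ := ‹Nonempty Y›
  obtain ⟨v, hv, -⟩ := hbasis.exists_subset_of_mem_open (mem_univ y) isOpen_univ
  obtain ⟨W, rfl⟩ := hsc.exists_eq_range ⟨v, hv⟩
  refine ⟨W, fun n => hs (mem_range_self n), fun y y' hne => ?_⟩
  obtain ⟨_, ⟨n, rfl⟩, hy, hsub⟩ :=
    hbasis.exists_subset_of_mem_open hne isClosed_singleton.isOpen_compl
  exact ⟨n, hy, fun h => hsub h rfl⟩

theorem nonempty_homeomorph_cantor (Y : Type*) [TopologicalSpace Y] [T2Space Y]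
    [CompactSpace Y] [TotallyDisconnectedSpace Y] [SecondCountableTopology Y] [PerfectSpace Y]
    [Nonempty Y] : Nonempty (Y ≃ₜ Cantor) :=
  let ⟨W, hW, hsep⟩ := exists_separating_clopen_seq Y
  nonempty_homeomorph_cantor_of_separating_clopens W hW hsep

section Shift

variable {G A : Type} [Group G]

@[simp]
lemma shift_one (x : G → A) : shift 1 x = x := by
  funext h
  simp [shift]

lemma shift_mul (g h : G) (x : G → A) : shift (g * h) x = shift g (shift h x) := by
  funext k
  simp [shift, mul_assoc]

variable [TopologicalSpace A]

def shiftHomeomorph : G →* ((G → A) ≃ₜ (G → A)) where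
  toFun g :=
    { toFun := shift g
      invFun := shift g⁻¹
      left_inv x := by rw [← shift_mul, inv_mul_cancel, shift_one]
      right_inv x := by rw [← shift_mul, mul_inv_cancel, shift_one]
      continuous_toFun := continuous_pi fun _ => continuous_apply _
      continuous_invFun := continuous_pi fun _ => continuous_apply _ }
  map_one' := by ext1 x; exact shift_one x
  map_mul' g h := by ext1 x; exact shift_mul g h x

def subshiftHomeomorph {X : Set (G → A)} (hX : ∀ g : G, ∀ x ∈ X, shift g x ∈ X) :
    G →* (X ≃ₜ X) where
  toFun g := (shiftHomeomorph g).subtype fun x =>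
    ⟨hX g x, fun h => by simpa [← shift_mul] using hX g⁻¹ (shift g x) h⟩
  map_one' := by ext1 x; exact Subtype.ext (shift_one _)
  map_mul' g h := by ext1 x; exact Subtype.ext (shift_mul g h _)

@[simp]
lemma coe_subshiftHomeomorph_apply {X : Set (G → A)} (hX : ∀ g : G, ∀ x ∈ X, shift g x ∈ X)
    (g : G) (x : X) : (subshiftHomeomorph hX g x : G → A) = shift g x := rfl

end Shift

def Homeomorph.prodCongrRightHom (Z : Type*) {Y : Type*} [TopologicalSpace Y]
    [TopologicalSpace Z] : (Y ≃ₜ Y) →* (Z × Y ≃ₜ Z × Y) where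
  toFun f := (Homeomorph.refl Z).prodCongr f
  map_one' := rfl
  map_mul' _ _ := rfl

@[simp]
lemma Homeomorph.prodCongrRightHom_apply (Z : Type*) {Y : Type*} [TopologicalSpace Y]
    [TopologicalSpace Z] (f : Y ≃ₜ Y) (p : Z × Y) : prodCongrRightHom Z f p = (p.1, f p.2) := rfl

def Homeomorph.permCongrHom {Y Z : Type*} [TopologicalSpace Y] [TopologicalSpace Z]
    (Φ : Y ≃ₜ Z) : (Y ≃ₜ Y) →* (Z ≃ₜ Z) where
  toFun f := Φ.symm.trans (f.trans Φ)
  map_one' := by ext; simp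
  map_mul' _ _ := by ext; simp

@[simp]
lemma Homeomorph.permCongrHom_apply {Y Z : Type*} [TopologicalSpace Y] [TopologicalSpace Z]
    (Φ : Y ≃ₜ Z) (f : Y ≃ₜ Y) (z : Z) : Φ.permCongrHom f z = Φ (f (Φ.symm z)) := rfl

lemma isAction_of_monoidHom {G : Type} [Group G] (ρ : G →* (Cantor ≃ₜ Cantor)) :
    IsAction G fun g => ρ g :=
  ⟨by ext; simp, fun g h => by ext; simp⟩

lemma ActSpace.coding_equivariant {G A : Type} [Group G] (α : ActSpace G) (c : Cantor → A)
    (h : G) (z : Cantor) :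
    (fun g : G => c ((α.1 g⁻¹) ((α.1 h) z))) = shift h (fun g : G => c ((α.1 g⁻¹) z)) := by
  funext g
  rw [shift, ← ContinuousMap.comp_apply, ← α.2.2, mul_inv_rev, inv_inv]

/-- Every subshift containing every letter at the identity is the
symbolic image of some continuous action of `G` on the Cantor space, via a map of the
form `Q(z)(g) = c(α(g⁻¹)z)` with `c` continuous. -/
theorem subshift_is_image_of_cantor_action (G : Type) [Group G] [Countable G]
    (A : Type) [Fintype A] [Nontrivial A]
    (X : Set (G → A)) (hX : IsSubshift G A X)
    (hfull : ∀ a : A, ∃ x ∈ X, x 1 = a) :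
    ∃ (α : ActSpace G) (c : Cantor → A),
      ContinuousToDiscrete c ∧
      (∀ (h : G) (z : Cantor),
        (fun g : G => c ((α.1 g⁻¹) ((α.1 h) z))) =
          shift h (fun g : G => c ((α.1 g⁻¹) z))) ∧
      Set.range (fun (z : Cantor) (g : G) => c ((α.1 g⁻¹) z)) = X := by
  let : TopologicalSpace A := ⊥
  have : DiscreteTopology A := ⟨rfl⟩
  obtain ⟨x₀, hx₀, -⟩ := hfull (Classical.arbitrary A)
  have : Nonempty X := ⟨⟨x₀, hx₀⟩⟩
  have : CompactSpace X := isCompact_iff_compactSpace.1 hX.1.isCompact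
  obtain ⟨Φ⟩ := nonempty_homeomorph_cantor (Cantor × X)
  let ρ : G →* (Cantor ≃ₜ Cantor) := Φ.permCongrHom.comp
    ((Homeomorph.prodCongrRightHom Cantor).comp (subshiftHomeomorph hX.2))
  let c : Cantor → A := fun z => ((Φ.symm z).2 : G → A) 1
  have hQ : (fun (z : Cantor) (g : G) => c (ρ g⁻¹ z)) = fun z => ((Φ.symm z).2 : G → A) := by
    funext z g
    simp only [c, ρ, MonoidHom.comp_apply, Homeomorph.permCongrHom_apply,
      Homeomorph.symm_apply_apply, Homeomorph.prodCongrRightHom_apply,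
      coe_subshiftHomeomorph_apply, shift, inv_inv, mul_one]
  refine ⟨⟨_, isAction_of_monoidHom ρ⟩, c, ?_, ActSpace.coding_equivariant _ c, ?_⟩
  · exact (continuous_apply 1).comp
      (continuous_subtype_val.comp (continuous_snd.comp Φ.symm.continuous))
  · change Set.range (fun (z : Cantor) (g : G) => c (ρ g⁻¹ z)) = X
    rw [hQ]
    change Set.range ((Subtype.val ∘ Prod.snd) ∘ Φ.symm) = X
    rw [Φ.symm.surjective.range_comp, Prod.snd_surjective.range_comp, Subtype.range_coe]
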